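/- arXiv:2112.14104 — 2 statements merged into one kernel-verified Lean document; each statement's English description precedes it below -/
import Mathlib

section
/- Let φ : ℝ → ℝ be a Schwartz function whose Fourier transform φ̂ is supported in {|ξ| ≤ 1/2}. Fix s ∈ ℝ, p ∈ [1,∞), δ = p/2, and for n ≥ 1 define f_n(x) = 2^{-n(s+1/2)} φ(2^{-δn} x) sin((17/12) 2^n x). Then the Fourier transform of f_n is supported in {ξ : (17/12)2^n − 2^{-δn-1} ≤ |ξ| ≤ (17/12)2^n + 2^{-δn-1}}, which is contained in {ξ : (33/24)2^n ≤ |ξ| ≤ (35/24)2^n}. -/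
open MeasureTheory Real Filter Topology
open scoped ENNReal

noncomputable def FT (f : ℝ → ℂ) (ξ : ℝ) : ℂ :=
  ∫ x : ℝ, Complex.exp (-(Complex.I * (x:ℂ) * (ξ:ℂ))) * f x

noncomputable def FTinv (g : ℝ → ℂ) (x : ℝ) : ℂ :=
  (1 / (2 * Real.pi) : ℝ) * ∫ ξ : ℝ, Complex.exp (Complex.I * (x:ℂ) * (ξ:ℂ)) * g ξ

noncomputable def fseq (s p : ℝ) (φ0 : ℝ → ℝ) (n : ℕ) (x : ℝ) : ℝ :=
  (2:ℝ) ^ (-(n:ℝ) * (s + 1/2)) * φ0 ((2:ℝ) ^ (-(p/2) * (n:ℝ)) * x) * Real.sin ((17/12) * (2:ℝ) ^ (n:ℝ) * x)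

noncomputable def gseq (p : ℝ) (φ0 : ℝ → ℝ) (n : ℕ) (x : ℝ) : ℝ :=
  (2:ℝ) ^ (-(n:ℝ)) * φ0 ((2:ℝ) ^ (-(p/2) * (n:ℝ)) * x)

lemma ft_int_aux (φ0 : ℝ → ℝ) (hc : Continuous φ0)
    (hφ0dec : ∀ k m : ℕ, ∃ C : ℝ, ∀ x : ℝ, |x| ^ k * |iteratedDeriv m φ0 x| ≤ C) :
    Integrable (fun x => (φ0 x : ℂ)) := by
  obtain ⟨C0, h0⟩ := hφ0dec 0 0
  obtain ⟨C2, h2⟩ := hφ0dec 2 0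
  simp only [iteratedDeriv_zero, pow_zero, one_mul] at h0 h2
  have hR : Integrable φ0 := by
    refine (integrable_inv_one_add_sq.const_mul (C0 + C2)).mono'
      hc.aestronglyMeasurable (Filter.Eventually.of_forall fun x => ?_)
    have hx : (0:ℝ) < 1 + x ^ 2 := by positivity
    rw [Real.norm_eq_abs, mul_comm, inv_mul_eq_div, le_div_iff₀ hx]
    nlinarith [h0 x, h2 x, sq_abs x, abs_nonneg (φ0 x)]
  exact hR.ofReal

lemma ft_exp_int (φ0 : ℝ → ℝ) (hint : Integrable (fun x => (φ0 x : ℂ)))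
    {lam : ℝ} (hlam : lam ≠ 0) (η : ℝ) :
    Integrable (fun x : ℝ => Complex.exp (-(Complex.I * (x:ℂ) * (η:ℂ))) * (φ0 (lam * x) : ℂ)) := by
  have h1 : Integrable (fun x : ℝ => (φ0 (lam * x) : ℂ)) := hint.comp_mul_left' hlam
  refine h1.bdd_mul (c := 1) ?_ (Filter.Eventually.of_forall fun x => ?_)
  · exact (Complex.continuous_exp.comp (by continuity)).aestronglyMeasurable
  · rw [Complex.norm_exp]
    simp

lemma ft_scale (φ0 : ℝ → ℝ) {lam : ℝ} (hlam : lam ≠ 0) (η : ℝ) :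
    (∫ x : ℝ, Complex.exp (-(Complex.I * (x:ℂ) * (η:ℂ))) * (φ0 (lam * x) : ℂ))
      = (|lam⁻¹| : ℝ) • FT (fun x => (φ0 x : ℂ)) (η / lam) := by
  have key : (fun x : ℝ => Complex.exp (-(Complex.I * (x:ℂ) * (η:ℂ))) * (φ0 (lam * x) : ℂ))
      = fun x : ℝ => (fun y : ℝ => Complex.exp (-(Complex.I * (y:ℂ) * ((η / lam : ℝ):ℂ))) * (φ0 y : ℂ)) (lam * x) := by
    funext x
    simp only
    congr 2
    push_cast
    have hl : (lam:ℂ) ≠ 0 := Complex.ofReal_ne_zero.2 hlam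
    field_simp
  rw [key, MeasureTheory.Measure.integral_comp_mul_left
    (fun y : ℝ => Complex.exp (-(Complex.I * (y:ℂ) * ((η / lam : ℝ):ℂ))) * (φ0 y : ℂ)) lam]
  rfl

lemma ft_formula (φ0 : ℝ → ℝ) (hint : Integrable (fun x => (φ0 x : ℂ)))
    (c a : ℝ) {lam : ℝ} (hlam : lam ≠ 0) (ξ : ℝ) :
    FT (fun x => ((c * φ0 (lam * x) * Real.sin (a * x) : ℝ) : ℂ)) ξ
      = ((c : ℂ) * Complex.I / 2) *
          ((|lam⁻¹| : ℝ) • FT (fun x => (φ0 x : ℂ)) ((ξ + a) / lam)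
            - (|lam⁻¹| : ℝ) • FT (fun x => (φ0 x : ℂ)) ((ξ - a) / lam)) := by
  have ptwise : ∀ x : ℝ,
      Complex.exp (-(Complex.I * (x:ℂ) * (ξ:ℂ))) * ((c * φ0 (lam * x) * Real.sin (a * x) : ℝ) : ℂ)
        = ((c : ℂ) * Complex.I / 2) * (Complex.exp (-(Complex.I * (x:ℂ) * ((ξ + a : ℝ):ℂ))) * (φ0 (lam * x) : ℂ))
          - ((c : ℂ) * Complex.I / 2) * (Complex.exp (-(Complex.I * (x:ℂ) * ((ξ - a : ℝ):ℂ))) * (φ0 (lam * x) : ℂ)) := by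
    intro x
    push_cast
    rw [Complex.sin,
      show -((a:ℂ) * (x:ℂ)) * Complex.I = -(Complex.I * (x:ℂ) * (a:ℂ)) by ring,
      show ((a:ℂ) * (x:ℂ)) * Complex.I = Complex.I * (x:ℂ) * (a:ℂ) by ring,
      show -(Complex.I * (x:ℂ) * ((ξ:ℂ) + (a:ℂ))) = -(Complex.I * (x:ℂ) * (ξ:ℂ)) + -(Complex.I * (x:ℂ) * (a:ℂ)) by ring,
      show -(Complex.I * (x:ℂ) * ((ξ:ℂ) - (a:ℂ))) = -(Complex.I * (x:ℂ) * (ξ:ℂ)) + Complex.I * (x:ℂ) * (a:ℂ) by ring,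
      Complex.exp_add, Complex.exp_add]
    ring
  conv_lhs => rw [FT]
  rw [integral_congr_ae (Filter.Eventually.of_forall ptwise)]
  rw [integral_sub ((ft_exp_int φ0 hint hlam (ξ + a)).const_mul _)
      ((ft_exp_int φ0 hint hlam (ξ - a)).const_mul _),
    integral_const_mul, integral_const_mul, ft_scale φ0 hlam, ft_scale φ0 hlam]
  ring


theorem stmt1 (s p : ℝ) (hp : 1 ≤ p)
    (φ0 : ℝ → ℝ) (hφ0smooth : ContDiff ℝ (⊤ : ℕ∞) φ0) (hφ0even : ∀ x, φ0 (-x) = φ0 x)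
    (hφ0ne : φ0 ≠ 0)
    (hφ0dec : ∀ k m : ℕ, ∃ C : ℝ, ∀ x : ℝ, |x| ^ k * |iteratedDeriv m φ0 x| ≤ C)
    (hφ0supp : ∀ ξ : ℝ, FT (fun x => (φ0 x : ℂ)) ξ ≠ 0 → |ξ| ≤ 1/2)
    (hφ0one : ∀ ξ : ℝ, |ξ| ≤ 1/4 → FT (fun x => (φ0 x : ℂ)) ξ = 1) :
    ∃ N : ℕ, 1 ≤ N ∧ ∀ n : ℕ, N ≤ n →
      (Function.support (FT (fun x => (fseq s p φ0 n x : ℂ))) ⊆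
        {ξ : ℝ | (17/12) * (2:ℝ) ^ (n:ℝ) - (2:ℝ) ^ (-(p/2) * (n:ℝ) - 1) ≤ |ξ| ∧
                  |ξ| ≤ (17/12) * (2:ℝ) ^ (n:ℝ) + (2:ℝ) ^ (-(p/2) * (n:ℝ) - 1)}) ∧
      ({ξ : ℝ | (17/12) * (2:ℝ) ^ (n:ℝ) - (2:ℝ) ^ (-(p/2) * (n:ℝ) - 1) ≤ |ξ| ∧
                  |ξ| ≤ (17/12) * (2:ℝ) ^ (n:ℝ) + (2:ℝ) ^ (-(p/2) * (n:ℝ) - 1)} ⊆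
        {ξ : ℝ | (33/24) * (2:ℝ) ^ (n:ℝ) ≤ |ξ| ∧ |ξ| ≤ (35/24) * (2:ℝ) ^ (n:ℝ)}) := by
  refine ⟨4, by norm_num, fun n hn => ?_⟩
  have hint : Integrable (fun x => (φ0 x : ℂ)) := ft_int_aux φ0 hφ0smooth.continuous hφ0dec
  have hlampos : (0:ℝ) < (2:ℝ) ^ (-(p/2) * (n:ℝ)) := Real.rpow_pos_of_pos two_pos _
  have hlamne : (2:ℝ) ^ (-(p/2) * (n:ℝ)) ≠ 0 := ne_of_gt hlampos
  set lam := (2:ℝ) ^ (-(p/2) * (n:ℝ)) with hlamdef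
  set a := (17/12) * (2:ℝ) ^ (n:ℝ) with hadef
  set c := (2:ℝ) ^ (-(n:ℝ) * (s + 1/2)) with hcdef
  have h2n : (16:ℝ) ≤ (2:ℝ) ^ (n:ℝ) := by
    calc (16:ℝ) = (2:ℝ) ^ ((4:ℕ):ℝ) := by rw [Real.rpow_natCast]; norm_num
    _ ≤ (2:ℝ) ^ (n:ℝ) := Real.rpow_le_rpow_of_exponent_le one_le_two (by exact_mod_cast hn)
  have hlam1 : lam ≤ 1 := by
    apply Real.rpow_le_one_of_one_le_of_nonpos one_le_two
    have : (0:ℝ) ≤ (n:ℝ) := Nat.cast_nonneg n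
    nlinarith
  have hhalf : (2:ℝ) ^ (-(p/2) * (n:ℝ) - 1) = lam / 2 := by
    rw [Real.rpow_sub two_pos, Real.rpow_one, ← hlamdef]
  have hfun : (fun x : ℝ => ((fseq s p φ0 n x : ℝ) : ℂ))
      = fun x : ℝ => ((c * φ0 (lam * x) * Real.sin (a * x) : ℝ) : ℂ) := rfl
  constructor
  · intro ξ hξ
    rw [Function.mem_support, hfun, ft_formula φ0 hint c a hlamne ξ] at hξ
    have hor : FT (fun x => (φ0 x : ℂ)) ((ξ + a) / lam) ≠ 0 ∨
        FT (fun x => (φ0 x : ℂ)) ((ξ - a) / lam) ≠ 0 := by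
      by_contra h
      push_neg at h
      rw [h.1, h.2] at hξ
      simp at hξ
    have hmain : |ξ + a| ≤ lam / 2 ∨ |ξ - a| ≤ lam / 2 := by
      rcases hor with h | h
      · left
        have hb := hφ0supp _ h
        rw [abs_div, abs_of_pos hlampos, div_le_iff₀ hlampos] at hb
        linarith
      · right
        have hb := hφ0supp _ h
        rw [abs_div, abs_of_pos hlampos, div_le_iff₀ hlampos] at hb
        linarith
    rw [Set.mem_setOf_eq, hhalf]
    have ha16 : (17/12) * 16 ≤ a := by
      rw [hadef]; nlinarith
    rcases hmain with h | h
    · have hb := abs_le.1 h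
      have hneg : ξ < 0 := by nlinarith
      rw [abs_of_neg hneg]
      constructor <;> nlinarith
    · have hb := abs_le.1 h
      have hpos : 0 < ξ := by nlinarith
      rw [abs_of_pos hpos]
      constructor <;> nlinarith
  · intro ξ hξ
    rw [Set.mem_setOf_eq, hhalf] at hξ
    rw [Set.mem_setOf_eq]
    constructor <;> nlinarith [hξ.1, hξ.2]
end

section
/- Let φ be a nonzero Schwartz function with φ̂ supported in {|ξ| ≤ 1/2}, let s ∈ ℝ, p ∈ [1,∞), r ∈ [1,∞], and define f_n(x) = 2^{-n(s+1/2)} φ(2^{-(p/2)n} x) sin((17/12) 2^n x). Then for every σ ∈ ℝ and all sufficiently large n, the Littlewood–Paley blocks satisfy Δ_j f_n = f_n if j = n and Δ_j f_n = 0 if j ≠ n, and consequently ‖f_n‖_{B^σ_{p,r}(ℝ)} = 2^{nσ} ‖f_n‖_{L^p} ≤ C 2^{n(σ−s)} ‖φ‖_{L^p}. -/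
open MeasureTheory Real Filter Topology FourierTransform
open scoped ENNReal

noncomputable def LPblock (χ φ : ℝ → ℝ) (j : ℤ) (f : ℝ → ℂ) : ℝ → ℂ :=
  if j = -1 then FTinv (fun ξ => (χ ξ : ℂ) * FT f ξ)
  else if 0 ≤ j then FTinv (fun ξ => ((φ ((2:ℝ) ^ (-j) * ξ) : ℝ) : ℂ) * FT f ξ)
  else 0

noncomputable def besov (χ φ : ℝ → ℝ) (σ : ℝ) (p r : ℝ≥0∞) (f : ℝ → ℂ) : ℝ≥0∞ :=
  if r = ⊤ then
    ⨆ j : ℤ, if -1 ≤ j then ENNReal.ofReal ((2:ℝ) ^ ((j : ℝ) * σ)) * eLpNorm (LPblock χ φ j f) p volume else 0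
  else
    (∑' j : ℤ, if -1 ≤ j then (ENNReal.ofReal ((2:ℝ) ^ ((j : ℝ) * σ)) * eLpNorm (LPblock χ φ j f) p volume) ^ r.toReal else 0) ^ (1 / r.toReal)

noncomputable def besovR (χ φ : ℝ → ℝ) (σ : ℝ) (p r : ℝ≥0∞) (f : ℝ → ℝ) : ℝ :=
  (besov χ φ σ p r (fun x => (f x : ℂ))).toReal

lemma FT_eq_fourierIntegral (f : ℝ → ℂ) (ξ : ℝ) : FT f ξ = 𝓕 f (ξ / (2*π)) := by
  rw [Real.fourier_eq']
  unfold FT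
  congr 1 with x
  rw [smul_eq_mul]
  congr 1
  have h : (-2 * π * (ξ / (2 * π) * x) : ℝ) = -(x*ξ) := by
    rw [show ξ / (2 * π) * x = x * (ξ / (2 * π)) by ring]
    field_simp
  simp only [RCLike.inner_apply, starRingEnd_apply, star_trivial]
  rw [h]
  push_cast
  ring

lemma fourierIntegral_eq_FT (f : ℝ → ℂ) (w : ℝ) : 𝓕 f w = FT f (2*π*w) := by
  rw [FT_eq_fourierIntegral]
  congr 1
  field_simp

lemma continuous_FI {f : ℝ → ℂ} (hf : Integrable f) : Continuous (𝓕 f) := by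
  apply VectorFourier.fourierIntegral_continuous Real.continuous_fourierChar _ hf
  exact continuous_inner

lemma FTinv_eq (g : ℝ → ℂ) (x : ℝ) : FTinv g x = 𝓕⁻ (fun w => g (2*π*w)) x := by
  rw [Real.fourierInv_eq']
  unfold FTinv
  have key : ∀ v : ℝ, Complex.exp (↑(2 * π * (inner ℝ v x : ℝ)) * Complex.I) • g (2*π*v)
      = (fun ξ : ℝ => Complex.exp (Complex.I * (x:ℂ) * (ξ:ℂ)) * g ξ) (2*π*v) := by
    intro v
    simp only [smul_eq_mul, RCLike.inner_apply, starRingEnd_apply, star_trivial]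
    congr 2
    push_cast; ring
  simp_rw [key]
  rw [MeasureTheory.Measure.integral_comp_mul_left
    (fun ξ : ℝ => Complex.exp (Complex.I * (x:ℂ) * (ξ:ℂ)) * g ξ) (2*π)]
  rw [abs_of_pos (by positivity : (0:ℝ) < (2*π)⁻¹), Complex.real_smul]
  norm_num

lemma FTinv_FT {f : ℝ → ℂ} (hc : Continuous f) (hi : Integrable f)
    (hFi : Integrable (𝓕 f)) : FTinv (FT f) = f := by
  funext x
  rw [FTinv_eq]
  have h2 : (fun w => FT f (2*π*w)) = 𝓕 f := by
    funext w
    rw [FT_eq_fourierIntegral]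
    congr 1
    field_simp
  rw [h2, hc.fourierInv_fourier_eq hi hFi]

lemma FTinv_zero : FTinv (fun _ => (0:ℂ)) = 0 := by
  funext x
  simp [FTinv]

lemma FT_congr {f g : ℝ → ℂ} (h : ∀ x, f x = g x) : FT f = FT g := by
  have : f = g := funext h
  rw [this]

lemma norm_exp_I_mul (x η : ℝ) : ‖Complex.exp (-(Complex.I * (x:ℂ) * (η:ℂ)))‖ = 1 := by
  rw [Complex.norm_exp]
  simp

lemma integrable_exp_mul {g : ℝ → ℂ} (hg : Integrable g) (η : ℝ) :
    Integrable (fun x : ℝ => Complex.exp (-(Complex.I * (x:ℂ) * (η:ℂ))) * g x) := by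
  apply hg.bdd_mul (c := 1)
  · apply Continuous.aestronglyMeasurable
    fun_prop
  · exact ae_of_all _ (fun x => le_of_eq (norm_exp_I_mul x η))

lemma FT_sin_formula {g : ℝ → ℂ} (hg : Integrable g) (c b ξ : ℝ) :
    FT (fun x => (c:ℂ) * g x * (Real.sin (b*x) : ℂ)) ξ
      = (c:ℂ) * (Complex.I/2) * (FT g (ξ+b) - FT g (ξ-b)) := by
  unfold FT
  have key : ∀ x : ℝ, Complex.exp (-(Complex.I * (x:ℂ) * (ξ:ℂ))) * ((c:ℂ) * g x * (Real.sin (b*x) : ℂ))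
      = (c:ℂ) * (Complex.I/2) *
        (Complex.exp (-(Complex.I * (x:ℂ) * ((ξ+b:ℝ):ℂ))) * g x
          - Complex.exp (-(Complex.I * (x:ℂ) * ((ξ-b:ℝ):ℂ))) * g x) := by
    intro x
    rw [Complex.ofReal_sin, Complex.sin]
    rw [show (-(Complex.I * (x:ℂ) * ((ξ+b:ℝ):ℂ))) = -(Complex.I * x * ξ) + -(↑(b*x)) * Complex.I by
      push_cast; ring]
    rw [show (-(Complex.I * (x:ℂ) * ((ξ-b:ℝ):ℂ))) = -(Complex.I * x * ξ) + (↑(b*x)) * Complex.I by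
      push_cast; ring]
    rw [Complex.exp_add, Complex.exp_add]
    ring
  simp_rw [key]
  rw [MeasureTheory.integral_const_mul, integral_sub (integrable_exp_mul hg (ξ+b)) (integrable_exp_mul hg (ξ-b))]

lemma FT_comp_mul_left (f : ℝ → ℂ) {a : ℝ} (ha : 0 < a) (η : ℝ) :
    FT (fun x => f (a*x)) η = (a:ℂ)⁻¹ * FT f (η/a) := by
  unfold FT
  have key : ∀ x : ℝ, Complex.exp (-(Complex.I * (x:ℂ) * (η:ℂ))) * f (a*x)
      = (fun y : ℝ => Complex.exp (-(Complex.I * (y:ℂ) * ((η/a:ℝ):ℂ))) * f y) (a*x) := by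
    intro x
    simp only
    congr 2
    have ha' : ((a:ℂ)) ≠ 0 := by exact_mod_cast ha.ne'
    push_cast
    field_simp
  simp_rw [key]
  rw [MeasureTheory.Measure.integral_comp_mul_left
    (fun y : ℝ => Complex.exp (-(Complex.I * (y:ℂ) * ((η/a:ℝ):ℂ))) * f y) a]
  rw [abs_of_pos (by positivity : (0:ℝ) < a⁻¹), Complex.real_smul]
  push_cast
  ring

lemma eLpNorm_comp_mul_left (f : ℝ → ℂ) (hf : AEStronglyMeasurable f volume)
    {a : ℝ} (ha : 0 < a) (q : ℝ≥0∞) (hq : q ≠ ∞) :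
    eLpNorm (fun x => f (a*x)) q volume
      = ENNReal.ofReal a⁻¹ ^ (1/q).toReal * eLpNorm f q volume := by
  have hmap : Measure.map (fun x : ℝ => a * x) volume = ENNReal.ofReal |a⁻¹| • volume :=
    Real.map_volume_mul_left ha.ne'
  have h1 : eLpNorm (fun x => f (a*x)) q volume = eLpNorm f q (Measure.map (fun x : ℝ => a * x) volume) := by
    rw [eLpNorm_map_measure (by rw [hmap]; exact hf.smul_measure _) (measurable_const_mul a).aemeasurable]
    rfl
  rw [h1, hmap, eLpNorm_smul_measure_of_ne_top hq, abs_of_pos (inv_pos.2 ha), smul_eq_mul]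

lemma integrable_of_dec {φ0 : ℝ → ℝ} (hc : Continuous φ0)
    (hdec : ∀ k m : ℕ, ∃ C : ℝ, ∀ x : ℝ, |x| ^ k * |iteratedDeriv m φ0 x| ≤ C) :
    Integrable (fun x => ((φ0 x : ℝ) : ℂ)) := by
  obtain ⟨C0, h0⟩ := hdec 0 0
  obtain ⟨C2, h2⟩ := hdec 2 0
  have key : ∀ x : ℝ, ‖((φ0 x : ℝ) : ℂ)‖ ≤ (C0 + C2) * (1 + x^2)⁻¹ := by
    intro x
    have h0' := h0 x
    have h2' := h2 x
    rw [iteratedDeriv_zero] at h0' h2'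
    rw [pow_zero, one_mul] at h0'
    rw [sq_abs] at h2'
    have hx : (0:ℝ) < 1 + x^2 := by positivity
    rw [Complex.norm_real, Real.norm_eq_abs, ← div_eq_mul_inv, le_div_iff₀ hx]
    nlinarith [abs_nonneg (φ0 x)]
  exact ((integrable_inv_one_add_sq.const_mul (C0+C2)).mono'
    (Complex.continuous_ofReal.comp hc).aestronglyMeasurable (ae_of_all _ key))


lemma norm_ofReal_mul_sin_le (c : ℝ) (z : ℂ) (t : ℝ) (ht : |t| ≤ 1) :
    ‖(c:ℂ) * z * ((t:ℝ):ℂ)‖ ≤ ‖(c:ℂ) * z‖ := by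
  calc ‖(c:ℂ) * z * ((t:ℝ):ℂ)‖ = ‖(c:ℂ) * z‖ * |t| := by
        rw [norm_mul, Complex.norm_real, Real.norm_eq_abs]
    _ ≤ ‖(c:ℂ) * z‖ * 1 := mul_le_mul_of_nonneg_left ht (norm_nonneg _)
    _ = ‖(c:ℂ) * z‖ := mul_one _


set_option maxHeartbeats 2000000 in
theorem stmt3 (s p : ℝ) (hp : 1 ≤ p) (r : ℝ≥0∞) (hr : 1 ≤ r)
    (χ φLP : ℝ → ℝ)
    (hχs : ContDiff ℝ (⊤ : ℕ∞) χ) (hφLPs : ContDiff ℝ (⊤ : ℕ∞) φLP)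
    (hχ01 : ∀ ξ, χ ξ ∈ Set.Icc (0:ℝ) 1) (hφLP01 : ∀ ξ, φLP ξ ∈ Set.Icc (0:ℝ) 1)
    (hχsupp : ∀ ξ, χ ξ ≠ 0 → |ξ| ≤ 4/3)
    (hφLPsupp : ∀ ξ, φLP ξ ≠ 0 → 3/4 ≤ |ξ| ∧ |ξ| ≤ 8/3)
    (hpart : ∀ ξ : ℝ, χ ξ + ∑' j : ℕ, φLP ((2:ℝ) ^ (-(j:ℤ)) * ξ) = 1)
    (hφLPone : ∀ ξ : ℝ, 4/3 ≤ |ξ| → |ξ| ≤ 3/2 → φLP ξ = 1)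
    (φ0 : ℝ → ℝ) (hφ0smooth : ContDiff ℝ (⊤ : ℕ∞) φ0) (hφ0even : ∀ x, φ0 (-x) = φ0 x)
    (hφ0ne : φ0 ≠ 0)
    (hφ0dec : ∀ k m : ℕ, ∃ C : ℝ, ∀ x : ℝ, |x| ^ k * |iteratedDeriv m φ0 x| ≤ C)
    (hφ0supp : ∀ ξ : ℝ, FT (fun x => (φ0 x : ℂ)) ξ ≠ 0 → |ξ| ≤ 1/2)
    (hφ0one : ∀ ξ : ℝ, |ξ| ≤ 1/4 → FT (fun x => (φ0 x : ℂ)) ξ = 1) :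
    ∃ C : ℝ, 0 < C ∧ ∃ N : ℕ, ∀ n : ℕ, N ≤ n →
      (∀ j : ℤ, (j = (n : ℤ) → LPblock χ φLP j (fun x => (fseq s p φ0 n x : ℂ)) = fun x => (fseq s p φ0 n x : ℂ)) ∧
                (-1 ≤ j → j ≠ (n : ℤ) → LPblock χ φLP j (fun x => (fseq s p φ0 n x : ℂ)) = 0)) ∧
      ∀ σ : ℝ,
        besov χ φLP σ (ENNReal.ofReal p) r (fun x => (fseq s p φ0 n x : ℂ)) =
          ENNReal.ofReal ((2:ℝ) ^ ((n:ℝ) * σ)) * eLpNorm (fun x => (fseq s p φ0 n x : ℂ)) (ENNReal.ofReal p) volume ∧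
        besov χ φLP σ (ENNReal.ofReal p) r (fun x => (fseq s p φ0 n x : ℂ)) ≤
          ENNReal.ofReal (C * (2:ℝ) ^ ((n:ℝ) * (σ - s))) * eLpNorm (fun x => (φ0 x : ℂ)) (ENNReal.ofReal p) volume := by
  have hp0 : (0:ℝ) < p := lt_of_lt_of_le one_pos hp
  set φ0C : ℝ → ℂ := fun x => (φ0 x : ℂ) with hφ0C
  have hφ0int : Integrable φ0C := integrable_of_dec hφ0smooth.continuous hφ0dec
  refine ⟨1, one_pos, 3, fun n hn => ?_⟩
  -- abbreviations
  set A : ℝ := (2:ℝ) ^ (-(p/2) * (n:ℝ)) with hA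
  set B : ℝ := (17/12) * (2:ℝ) ^ (n:ℝ) with hB
  set Cc : ℝ := (2:ℝ) ^ (-(n:ℝ) * (s + 1/2)) with hCc
  set fC : ℝ → ℂ := fun x => (fseq s p φ0 n x : ℂ) with hfC
  have hApos : 0 < A := Real.rpow_pos_of_pos two_pos _
  have hA1 : A ≤ 1 := by
    rw [hA]
    apply Real.rpow_le_one_of_one_le_of_nonpos one_le_two
    have : (0:ℝ) ≤ p/2 * n := by positivity
    linarith
  have hCcpos : 0 < Cc := Real.rpow_pos_of_pos two_pos _
  have h2n : (2:ℝ) ^ (n:ℝ) = ((2:ℝ)^n : ℝ) := Real.rpow_natCast 2 n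
  have h2npos : (0:ℝ) < (2:ℝ)^n := by positivity
  have h2n8 : (8:ℝ) ≤ (2:ℝ)^n := by
    calc (8:ℝ) = 2^3 := by norm_num
    _ ≤ 2^n := pow_le_pow_right₀ one_le_two hn
  have hprod : ((2:ℝ)^n)⁻¹ * (2:ℝ)^n = 1 := inv_mul_cancel₀ h2npos.ne'
  have hinv8 : ((2:ℝ)^n)⁻¹ ≤ 1/8 := by
    rw [show (1:ℝ)/8 = 8⁻¹ by norm_num]
    exact inv_anti₀ (by norm_num) h2n8
  have hfeq : ∀ x, fC x = (Cc:ℂ) * ((fun y => φ0C (A*y)) x) * ((Real.sin (B*x) : ℝ) : ℂ) := by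
    intro x
    simp only [hfC, fseq, Complex.ofReal_mul, hφ0C]
    rfl
  have hGint : Integrable (fun y => φ0C (A*y)) := hφ0int.comp_mul_left' hApos.ne'
  have hFTf : ∀ ξ, FT fC ξ = (Cc:ℂ) * (Complex.I/2) *
      ((A:ℂ)⁻¹ * FT φ0C ((ξ+B)/A) - (A:ℂ)⁻¹ * FT φ0C ((ξ-B)/A)) := by
    intro ξ
    rw [FT_congr hfeq, FT_sin_formula hGint, FT_comp_mul_left φ0C hApos, FT_comp_mul_left φ0C hApos]
  have hsupp : ∀ ξ, FT fC ξ ≠ 0 → B - 1/2 ≤ |ξ| ∧ |ξ| ≤ B + 1/2 := by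
    intro ξ h0
    have hne : FT φ0C ((ξ+B)/A) ≠ 0 ∨ FT φ0C ((ξ-B)/A) ≠ 0 := by
      by_contra hcon
      push_neg at hcon
      rw [hFTf, hcon.1, hcon.2] at h0
      simp at h0
    have habs : ∀ η : ℝ, FT φ0C (η/A) ≠ 0 → |η| ≤ 1/2 := by
      intro η hη
      have h12 := hφ0supp _ hη
      rw [abs_div, abs_of_pos hApos, div_le_iff₀ hApos] at h12
      calc |η| ≤ 1/2 * A := h12
      _ ≤ 1/2 := by linarith
    have hBpos : (1:ℝ) < B := by rw [hB, h2n]; linarith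
    have key : ∀ η : ℝ, |ξ - η| ≤ 1/2 → (|η| - 1/2 ≤ |ξ| ∧ |ξ| ≤ |η| + 1/2) := by
      intro η hd
      constructor
      · have := abs_sub_abs_le_abs_sub η ξ
        rw [abs_sub_comm] at this
        linarith
      · have := abs_sub_abs_le_abs_sub ξ η
        linarith
    rcases hne with hη | hη
    · have h12 := habs _ hη
      have hk := key (-B) (by rw [sub_neg_eq_add]; exact h12)
      rw [abs_neg, abs_of_pos (by linarith : (0:ℝ) < B)] at hk
      exact hk
    · have h12 := habs _ hη
      have hk := key B h12
      rw [abs_of_pos (by linarith : (0:ℝ) < B)] at hk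
      exact hk
  -- multiplier facts
  have hmult_n : (fun ξ => ((φLP ((2:ℝ) ^ (-(n:ℤ)) * ξ) : ℝ) : ℂ) * FT fC ξ) = FT fC := by
    funext ξ
    by_cases h0 : FT fC ξ = 0
    · rw [h0, mul_zero]
    · obtain ⟨hlo, hhi⟩ := hsupp ξ h0
      rw [hB, h2n] at hlo hhi
      have hpow : (2:ℝ) ^ (-(n:ℤ)) = ((2:ℝ)^n)⁻¹ := by
        rw [zpow_neg, zpow_natCast]
      have hφ1 : φLP ((2:ℝ) ^ (-(n:ℤ)) * ξ) = 1 := by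
        apply hφLPone
        · rw [hpow, abs_mul, abs_of_pos (inv_pos.2 h2npos)]
          nlinarith [mul_le_mul_of_nonneg_left hlo (inv_pos.2 h2npos).le]
        · rw [hpow, abs_mul, abs_of_pos (inv_pos.2 h2npos)]
          nlinarith [mul_le_mul_of_nonneg_left hhi (inv_pos.2 h2npos).le]
      rw [hφ1, Complex.ofReal_one, one_mul]
  have hmult_chi : (fun ξ => ((χ ξ : ℝ) : ℂ) * FT fC ξ) = fun _ => (0:ℂ) := by
    funext ξ
    by_cases h0 : FT fC ξ = 0
    · rw [h0, mul_zero]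
    · obtain ⟨hlo, _⟩ := hsupp ξ h0
      rw [hB, h2n] at hlo
      have hχ0 : χ ξ = 0 := by
        by_contra hc
        have := hχsupp ξ hc
        nlinarith
      rw [hχ0, Complex.ofReal_zero, zero_mul]
  have hmult_j : ∀ j : ℤ, 0 ≤ j → j ≠ (n:ℤ) →
      (fun ξ => ((φLP ((2:ℝ) ^ (-j) * ξ) : ℝ) : ℂ) * FT fC ξ) = fun _ => (0:ℂ) := by
    intro j hj0 hjn
    funext ξ
    by_cases h0 : FT fC ξ = 0
    · rw [h0, mul_zero]
    · obtain ⟨hlo, hhi⟩ := hsupp ξ h0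
      rw [hB, h2n] at hlo hhi
      have hφ0' : φLP ((2:ℝ) ^ (-j) * ξ) = 0 := by
        by_contra hne
        obtain ⟨h34, h83⟩ := hφLPsupp _ hne
        have hpj : (0:ℝ) < (2:ℝ) ^ (-j) := zpow_pos (by norm_num) _
        rw [abs_mul, abs_of_pos hpj] at h34 h83
        have hsplit : (2:ℝ) ^ (-j) = (2:ℝ) ^ ((n:ℤ) - j) * ((2:ℝ)^n)⁻¹ := by
          rw [← zpow_natCast (2:ℝ) n, ← zpow_neg, ← zpow_add₀ (two_ne_zero)]
          congr 1
          ring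
        rcases lt_or_gt_of_ne hjn with hlt | hgt
        · -- j < n : scale too big
          have ht2 : (2:ℝ) ≤ (2:ℝ) ^ ((n:ℤ) - j) := by
            calc (2:ℝ) = 2 ^ (1:ℤ) := (zpow_one 2).symm
            _ ≤ 2 ^ ((n:ℤ) - j) := zpow_le_zpow_right₀ one_le_two (by omega)
          have htpos : (0:ℝ) < (2:ℝ) ^ ((n:ℤ) - j) := zpow_pos (by norm_num) _
          have key := mul_le_mul_of_nonneg_left hlo
            (mul_pos htpos (inv_pos.2 h2npos)).le
          rw [← hsplit] at key
          have e1 : (2:ℝ) ^ (-j) * (17/12 * 2^n - 1/2)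
              = 17/12 * (2:ℝ) ^ ((n:ℤ) - j) - (2:ℝ) ^ (-j) * (1/2) := by
            linear_combination (17/12 * (2:ℝ)^n) * hsplit
              + (17/12 * (2:ℝ) ^ ((n:ℤ) - j)) * hprod
          have e2 : (2:ℝ) ^ (-j) ≤ (2:ℝ) ^ ((n:ℤ) - j) * (1/8) := by
            have := mul_le_mul_of_nonneg_left hinv8 htpos.le
            rw [← hsplit] at this
            exact this
          linarith [key, e1, e2, ht2, h83]
        · -- j > n : scale too small
          have ht12 : (2:ℝ) ^ ((n:ℤ) - j) ≤ 1/2 := by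
            calc (2:ℝ) ^ ((n:ℤ) - j) ≤ 2 ^ (-1:ℤ) := zpow_le_zpow_right₀ one_le_two (by omega)
            _ = 1/2 := by norm_num
          have h2mj : (2:ℝ) ^ (-j) ≤ 1/16 := by
            calc (2:ℝ) ^ (-j) ≤ 2 ^ (-4:ℤ) := zpow_le_zpow_right₀ one_le_two (by omega)
            _ = 1/16 := by norm_num
          have key := mul_le_mul_of_nonneg_left hhi hpj.le
          have e1 : (2:ℝ) ^ (-j) * (17/12 * 2^n + 1/2)
              = 17/12 * (2:ℝ) ^ ((n:ℤ) - j) + (2:ℝ) ^ (-j) * (1/2) := by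
            linear_combination (17/12 * (2:ℝ)^n) * hsplit
              + (17/12 * (2:ℝ) ^ ((n:ℤ) - j)) * hprod
          linarith [key, e1, ht12, h2mj, h34]
      rw [hφ0', Complex.ofReal_zero, zero_mul]
  -- inversion ingredients
  have hfc : Continuous fC := by
    rw [hfC]
    apply Complex.continuous_ofReal.comp
    unfold fseq
    exact (continuous_const.mul (hφ0smooth.continuous.comp
      (continuous_const.mul continuous_id))).mul
      (Real.continuous_sin.comp (continuous_const.mul continuous_id))
  have hfint : Integrable fC := by
    apply ((hGint.norm.const_mul |Cc|).mono' hfc.aestronglyMeasurable)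
    apply ae_of_all
    intro x
    rw [hfeq x]
    simp only [norm_mul, Complex.norm_real, Real.norm_eq_abs]
    have h2 : |Real.sin (B*x)| ≤ 1 := abs_sin_le_one _
    calc |Cc| * ‖φ0C (A*x)‖ * |Real.sin (B*x)|
        ≤ |Cc| * ‖φ0C (A*x)‖ * 1 :=
          mul_le_mul_of_nonneg_left h2 (by positivity)
      _ = |Cc| * ‖φ0C (A*x)‖ := mul_one _
  have hFint : Integrable (𝓕 fC) := by
    apply Continuous.integrable_of_hasCompactSupport (continuous_FI hfint)
    apply HasCompactSupport.intro (isCompact_Icc (a := -(B+1)) (b := B+1))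
    intro w hw
    simp only [Set.mem_Icc, not_and_or, not_le] at hw
    by_contra hne
    rw [fourierIntegral_eq_FT] at hne
    have hb := (hsupp _ hne).2
    have hπ : (1:ℝ) ≤ 2*π := by nlinarith [Real.pi_gt_three]
    have : |w| ≤ |2*π*w| := by
      rw [abs_mul, abs_of_pos (by positivity : (0:ℝ) < 2*π)]
      nlinarith [abs_nonneg w]
    have hwB : |w| ≤ B + 1/2 := le_trans this hb
    cases abs_cases w with
    | inl h => rcases hw with h' | h' <;> linarith [h.1, h.2]
    | inr h => rcases hw with h' | h' <;> linarith [h.1, h.2]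
  have hinv : FTinv (FT fC) = fC := FTinv_FT hfc hfint hFint
  have hnne : ((n:ℤ)) ≠ -1 := by omega
  have hn0 : (0:ℤ) ≤ (n:ℤ) := by positivity
  -- the blocks
  have hblocks : ∀ j : ℤ,
      (j = (n : ℤ) → LPblock χ φLP j fC = fC) ∧
      (-1 ≤ j → j ≠ (n : ℤ) → LPblock χ φLP j fC = 0) := by
    intro j
    constructor
    · rintro rfl
      unfold LPblock
      rw [if_neg hnne, if_pos hn0, hmult_n, hinv]
    · intro hj1 hjn
      rcases eq_or_lt_of_le hj1 with hj | hj
      · unfold LPblock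
        rw [if_pos hj.symm, hmult_chi, FTinv_zero]
      · have hj0 : (0:ℤ) ≤ j := by omega
        unfold LPblock
        rw [if_neg (by omega : j ≠ -1), if_pos hj0, hmult_j j hj0 hjn, FTinv_zero]
  -- Lp norm bound
  have hqT : (ENNReal.ofReal p) ≠ ⊤ := ENNReal.ofReal_ne_top
  have hφ0meas : AEStronglyMeasurable φ0C volume := hφ0int.1
  have hscale := eLpNorm_comp_mul_left φ0C hφ0meas hApos (ENNReal.ofReal p) hqT
  have hfnorm : eLpNorm fC (ENNReal.ofReal p) volume
      ≤ ENNReal.ofReal ((2:ℝ) ^ (-(n:ℝ)*s)) * eLpNorm φ0C (ENNReal.ofReal p) volume := by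
    have step1 : eLpNorm fC (ENNReal.ofReal p) volume
        ≤ eLpNorm (fun x => (Cc:ℂ) * φ0C (A*x)) (ENNReal.ofReal p) volume := by
      apply eLpNorm_mono
      intro x
      rw [hfeq x]
      exact norm_ofReal_mul_sin_le Cc _ _ (abs_sin_le_one _)
    have step2 : eLpNorm (fun x => (Cc:ℂ) * φ0C (A*x)) (ENNReal.ofReal p) volume
        = (‖(Cc:ℂ)‖₊ : ℝ≥0∞) * eLpNorm (fun x => φ0C (A*x)) (ENNReal.ofReal p) volume := by
      have hsm : (fun x => (Cc:ℂ) * φ0C (A*x)) = (Cc:ℂ) • (fun x => φ0C (A*x)) := by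
        funext x
        simp [smul_eq_mul]
      rw [hsm, eLpNorm_const_smul]
      rfl
    have hcoef : (‖(Cc:ℂ)‖₊ : ℝ≥0∞) * ENNReal.ofReal A⁻¹ ^ (1/(ENNReal.ofReal p)).toReal
        = ENNReal.ofReal ((2:ℝ) ^ (-(n:ℝ)*s)) := by
      have h1 : (‖(Cc:ℂ)‖₊ : ℝ≥0∞) = ENNReal.ofReal Cc := by
        rw [← enorm_eq_nnnorm, ← ofReal_norm, Complex.norm_real, Real.norm_eq_abs,
          abs_of_pos hCcpos]
      have h2 : (1/(ENNReal.ofReal p)).toReal = p⁻¹ := by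
        rw [one_div, ENNReal.toReal_inv, ENNReal.toReal_ofReal hp0.le]
      have h3 : ENNReal.ofReal A⁻¹ ^ (p⁻¹ : ℝ) = ENNReal.ofReal (A⁻¹ ^ (p⁻¹:ℝ)) :=
        ENNReal.ofReal_rpow_of_nonneg (inv_nonneg.2 hApos.le) (inv_nonneg.2 hp0.le)
      have h4 : A⁻¹ ^ (p⁻¹:ℝ) = (2:ℝ) ^ ((n:ℝ)/2) := by
        rw [hA, ← Real.rpow_neg (le_of_lt two_pos), ← Real.rpow_mul (le_of_lt two_pos)]
        congr 1
        field_simp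
      have h5 : Cc * (2:ℝ) ^ ((n:ℝ)/2) = (2:ℝ) ^ (-(n:ℝ)*s) := by
        rw [hCc, ← Real.rpow_add two_pos]
        congr 1
        ring
      rw [h2, h1, h3, h4, ← ENNReal.ofReal_mul hCcpos.le, h5]
    calc eLpNorm fC (ENNReal.ofReal p) volume
        ≤ eLpNorm (fun x => (Cc:ℂ) * φ0C (A*x)) (ENNReal.ofReal p) volume := step1
      _ = (‖(Cc:ℂ)‖₊ : ℝ≥0∞) * eLpNorm (fun x => φ0C (A*x)) (ENNReal.ofReal p) volume := step2
      _ = (‖(Cc:ℂ)‖₊ : ℝ≥0∞) * (ENNReal.ofReal A⁻¹ ^ (1/(ENNReal.ofReal p)).toReal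
            * eLpNorm φ0C (ENNReal.ofReal p) volume) := by rw [hscale]
      _ = ((‖(Cc:ℂ)‖₊ : ℝ≥0∞) * ENNReal.ofReal A⁻¹ ^ (1/(ENNReal.ofReal p)).toReal)
            * eLpNorm φ0C (ENNReal.ofReal p) volume := by rw [mul_assoc]
      _ = ENNReal.ofReal ((2:ℝ) ^ (-(n:ℝ)*s)) * eLpNorm φ0C (ENNReal.ofReal p) volume := by
            rw [hcoef]
  refine ⟨hblocks, fun σ => ?_⟩
  have hterm : ∀ j : ℤ,
      ENNReal.ofReal ((2:ℝ) ^ ((j:ℝ)*σ)) * eLpNorm (LPblock χ φLP j fC) (ENNReal.ofReal p) volume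
      = if j = (n:ℤ) then
          ENNReal.ofReal ((2:ℝ) ^ ((n:ℝ)*σ)) * eLpNorm fC (ENNReal.ofReal p) volume
        else 0 := by
    intro j
    by_cases hj : j = (n:ℤ)
    · subst hj
      rw [if_pos rfl, (hblocks _).1 rfl, Int.cast_natCast]
    · rw [if_neg hj]
      by_cases hj1 : -1 ≤ j
      · rw [(hblocks _).2 hj1 hj, eLpNorm_zero, mul_zero]
      · have hz : LPblock χ φLP j fC = 0 := by
          unfold LPblock
          rw [if_neg (by omega), if_neg (by omega)]
        rw [hz, eLpNorm_zero, mul_zero]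
  have heq : besov χ φLP σ (ENNReal.ofReal p) r fC
      = ENNReal.ofReal ((2:ℝ) ^ ((n:ℝ)*σ)) * eLpNorm fC (ENNReal.ofReal p) volume := by
    by_cases hrT : r = ⊤
    · unfold besov
      rw [if_pos hrT]
      apply le_antisymm
      · apply iSup_le
        intro j
        by_cases hj1 : -1 ≤ j
        · rw [if_pos hj1, hterm j]
          split_ifs
          · exact le_rfl
          · exact zero_le
        · rw [if_neg hj1]
          exact zero_le
      · refine le_trans (le_of_eq ?_) (le_iSup _ ((n:ℤ)))
        rw [if_pos (by omega : (-1:ℤ) ≤ (n:ℤ)), hterm, if_pos rfl]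
    · unfold besov
      rw [if_neg hrT]
      have hr0 : r ≠ 0 := (zero_lt_one.trans_le hr).ne'
      have ht : 0 < r.toReal := ENNReal.toReal_pos hr0 hrT
      have hz : ∀ j : ℤ, j ≠ (n:ℤ) →
          (if -1 ≤ j then (ENNReal.ofReal ((2:ℝ) ^ ((j:ℝ)*σ)) *
            eLpNorm (LPblock χ φLP j fC) (ENNReal.ofReal p) volume) ^ r.toReal else 0) = 0 := by
        intro j hj
        by_cases hj1 : -1 ≤ j
        · rw [if_pos hj1, hterm j, if_neg hj, ENNReal.zero_rpow_of_pos ht]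
        · rw [if_neg hj1]
      rw [tsum_eq_single ((n:ℤ)) hz, if_pos (by omega : (-1:ℤ) ≤ (n:ℤ)), hterm, if_pos rfl,
        ← ENNReal.rpow_mul, mul_one_div_cancel ht.ne', ENNReal.rpow_one]
  refine ⟨heq, ?_⟩
  rw [heq]
  calc ENNReal.ofReal ((2:ℝ) ^ ((n:ℝ)*σ)) * eLpNorm fC (ENNReal.ofReal p) volume
      ≤ ENNReal.ofReal ((2:ℝ) ^ ((n:ℝ)*σ)) *
        (ENNReal.ofReal ((2:ℝ) ^ (-(n:ℝ)*s)) * eLpNorm φ0C (ENNReal.ofReal p) volume) :=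
        mul_le_mul_right hfnorm _
    _ = ENNReal.ofReal ((2:ℝ) ^ ((n:ℝ)*σ) * (2:ℝ) ^ (-(n:ℝ)*s)) *
          eLpNorm φ0C (ENNReal.ofReal p) volume := by
        rw [← mul_assoc, ← ENNReal.ofReal_mul (Real.rpow_nonneg (by norm_num) _)]
    _ = ENNReal.ofReal (1 * (2:ℝ) ^ ((n:ℝ) * (σ - s))) *
          eLpNorm φ0C (ENNReal.ofReal p) volume := by
        congr 2
        rw [one_mul, ← Real.rpow_add two_pos]
        congr 1
        ring
end
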